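/- For |q|<1 and ζ with |ζ|<1, ζ ≠ 1 (and denominators nonzero): ₂φ₁(q²,0;q;q²;ζ) = 1 + ζ/((1−ζ)(1−q)) · R(ζ,q;q²), where R(α,β;Q) = Σ_{n≥0} (αβ)^n Q^{n²}/((αQ;Q)_n (βQ;Q)_n). -/

import Mathlib

/-!
Write `F(t, a) = Σ_{n ≥ 0} tⁿ / (a;Q)_n`; the left-hand side is `F(ζ, q)` with `Q = q²`.
Two term-by-term identities, `(1 - a)(F(t, a) - 1) = t F(t, aQ)` and
`(1 - t) F(t, aQ) = 1 + a (F(tQ, aQ) - 1)`, combine into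
`F(t, a) - 1 = t / ((1 - t)(1 - a)) · (1 + a (F(tQ, aQ) - 1))`.
Iterating this `N` times writes `F(t, a) - 1` as the first `N` terms
`t^{k+1} a^k Q^{k²} / ((t;Q)_{k+1} (a;Q)_{k+1})` plus the remainder
`(ta)^N Q^{N(N-1)} / ((t;Q)_N (a;Q)_N) · (F(tQ^N, aQ^N) - 1)`.
Since `‖(b;Q)_n‖` is bounded below uniformly in `n` and in `‖b‖ ≤ x < 1`, the remainder is
`O(x^{2N})`; with `t = ζ`, `a = q` the series of terms is `ζ / ((1 - ζ)(1 - q)) · R(ζ, q; q²)`.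
-/

open Complex

/-- The q-Pochhammer symbol `(a;q)_n = ∏_{j=0}^{n-1} (1 - a q^j)`. -/
noncomputable def qPoch (a q : ℂ) (n : ℕ) : ℂ := ∏ j ∈ Finset.range n, (1 - a * q ^ j)

/-- The universal mock theta function
`R(α,β;Q) = Σ_{n≥0} (αβ)^n Q^{n²}/((αQ;Q)_n (βQ;Q)_n)`. -/
noncomputable def univR (α β Q : ℂ) : ℂ :=
  ∑' n : ℕ, (α * β) ^ n * Q ^ (n ^ 2) / (qPoch (α * Q) Q n * qPoch (β * Q) Q n)

open Finset Filter Topology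

lemma exp_neg_div_one_sub_le_one_sub {x y : ℝ} (hy : 0 ≤ y) (hyx : y ≤ x) (hx : x < 1) :
    Real.exp (-(y / (1 - x))) ≤ 1 - y := by
  have hx' : 0 < 1 - x := by linarith
  set u := y / (1 - x)
  have hu : y ≤ u * (1 - y) := by
    rw [div_mul_eq_mul_div, le_div_iff₀ hx']
    exact mul_le_mul_of_nonneg_left (by linarith) hy
  calc Real.exp (-u) = (Real.exp u)⁻¹ := Real.exp_neg u
    _ ≤ (u + 1)⁻¹ := inv_anti₀ (by positivity) (Real.add_one_le_exp u)
    _ ≤ 1 - y := by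
      rw [inv_le_iff_one_le_mul₀ (by positivity)]
      nlinarith

lemma norm_mul_pow_le (z : ℂ) {Q : ℂ} (hQ : ‖Q‖ ≤ 1) (n : ℕ) : ‖z * Q ^ n‖ ≤ ‖z‖ := by
  rw [norm_mul, norm_pow]
  exact mul_le_of_le_one_right (norm_nonneg z) (pow_le_one₀ (norm_nonneg Q) hQ)

lemma norm_mul_pow_lt_one {z Q : ℂ} (hz : ‖z‖ < 1) (hQ : ‖Q‖ < 1) (n : ℕ) : ‖z * Q ^ n‖ < 1 :=
  (norm_mul_pow_le z hQ.le n).trans_lt hz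

lemma norm_mul_lt_one {z Q : ℂ} (hz : ‖z‖ < 1) (hQ : ‖Q‖ < 1) : ‖z * Q‖ < 1 := by
  simpa using norm_mul_pow_lt_one hz hQ 1

lemma one_sub_ne_zero_of_norm_lt_one {z : ℂ} (hz : ‖z‖ < 1) : 1 - z ≠ 0 := by
  rw [sub_ne_zero]
  rintro rfl
  simp at hz

lemma qPoch_zero (a Q : ℂ) : qPoch a Q 0 = 1 := rfl

lemma qPoch_succ (a Q : ℂ) (n : ℕ) : qPoch a Q (n + 1) = qPoch a Q n * (1 - a * Q ^ n) :=
  prod_range_succ _ _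

lemma qPoch_succ' (a Q : ℂ) (n : ℕ) : qPoch a Q (n + 1) = (1 - a) * qPoch (a * Q) Q n := by
  simp only [qPoch, prod_range_succ', pow_zero, mul_one, pow_succ', mul_assoc]
  ring

noncomputable def qPochBound (x r : ℝ) : ℝ := Real.exp (-(x / ((1 - x) * (1 - r))))

lemma qPochBound_pos (x r : ℝ) : 0 < qPochBound x r := Real.exp_pos _

lemma qPochBound_le_norm_qPoch {b Q : ℂ} {x : ℝ} (hb : ‖b‖ ≤ x) (hx : x < 1) (hQ : ‖Q‖ < 1)
    (n : ℕ) : qPochBound x ‖Q‖ ≤ ‖qPoch b Q n‖ := by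
  have hx0 : 0 ≤ x := (norm_nonneg b).trans hb
  have hQ' : 0 < 1 - ‖Q‖ := by linarith
  have hfactor (j : ℕ) : Real.exp (-(x * ‖Q‖ ^ j / (1 - x))) ≤ ‖1 - b * Q ^ j‖ := by
    have hxQ : x * ‖Q‖ ^ j ≤ x := mul_le_of_le_one_right hx0 (pow_le_one₀ (norm_nonneg Q) hQ.le)
    calc Real.exp (-(x * ‖Q‖ ^ j / (1 - x))) ≤ 1 - x * ‖Q‖ ^ j :=
          exp_neg_div_one_sub_le_one_sub (by positivity) hxQ hx
      _ ≤ 1 - ‖b * Q ^ j‖ := by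
          rw [norm_mul, norm_pow]
          gcongr
      _ ≤ ‖1 - b * Q ^ j‖ := by simpa using norm_sub_norm_le (1 : ℂ) (b * Q ^ j)
  have hgeom : ∑ j ∈ range n, x * ‖Q‖ ^ j / (1 - x) ≤ x / ((1 - x) * (1 - ‖Q‖)) := by
    have hsum : ∑ j ∈ range n, ‖Q‖ ^ j ≤ (1 - ‖Q‖)⁻¹ := by
      simpa [← range_eq_Ico] using geom_sum_Ico_le_of_lt_one (m := 0) (n := n) (norm_nonneg Q) hQ
    calc ∑ j ∈ range n, x * ‖Q‖ ^ j / (1 - x) = x / (1 - x) * ∑ j ∈ range n, ‖Q‖ ^ j := by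
          rw [mul_sum]; ring_nf
      _ ≤ x / (1 - x) * (1 - ‖Q‖)⁻¹ := by gcongr
      _ = x / ((1 - x) * (1 - ‖Q‖)) := by field_simp
  calc qPochBound x ‖Q‖ ≤ Real.exp (-∑ j ∈ range n, x * ‖Q‖ ^ j / (1 - x)) :=
        Real.exp_le_exp.2 (neg_le_neg hgeom)
    _ = ∏ j ∈ range n, Real.exp (-(x * ‖Q‖ ^ j / (1 - x))) := by
        rw [← sum_neg_distrib, Real.exp_sum]
    _ ≤ ∏ j ∈ range n, ‖1 - b * Q ^ j‖ :=
        prod_le_prod (fun j _ => (Real.exp_pos _).le) (fun j _ => hfactor j)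
    _ = ‖qPoch b Q n‖ := (norm_prod _ _).symm

lemma qPoch_ne_zero {b Q : ℂ} (hb : ‖b‖ < 1) (hQ : ‖Q‖ < 1) (n : ℕ) : qPoch b Q n ≠ 0 :=
  norm_pos_iff.1 ((qPochBound_pos _ _).trans_le (qPochBound_le_norm_qPoch le_rfl hb hQ n))

/-- `₂φ₁(Q,0;a;Q;t)`. -/
noncomputable def invQPochSeries (t a Q : ℂ) : ℂ := ∑' n : ℕ, t ^ n / qPoch a Q n

section invQPochSeries

variable {t a Q : ℂ} {x : ℝ}

lemma norm_div_qPoch_le (ht : ‖t‖ ≤ x) (ha : ‖a‖ ≤ x) (hx : x < 1) (hQ : ‖Q‖ < 1) (n : ℕ) :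
    ‖t ^ n / qPoch a Q n‖ ≤ (qPochBound x ‖Q‖)⁻¹ * x ^ n := by
  rw [norm_div, norm_pow, div_eq_inv_mul]
  exact mul_le_mul (inv_anti₀ (qPochBound_pos _ _) (qPochBound_le_norm_qPoch ha hx hQ n))
    (pow_le_pow_left₀ (norm_nonneg t) ht n) (by positivity) (inv_pos.2 (qPochBound_pos _ _)).le

lemma summable_div_qPoch (ht : ‖t‖ < 1) (ha : ‖a‖ < 1) (hQ : ‖Q‖ < 1) :
    Summable fun n : ℕ => t ^ n / qPoch a Q n := by
  have hx : max ‖t‖ ‖a‖ < 1 := max_lt ht ha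
  exact .of_norm_bounded ((summable_geometric_of_lt_one (by positivity) hx).mul_left _)
    (norm_div_qPoch_le (le_max_left _ _) (le_max_right _ _) hx hQ)

lemma norm_invQPochSeries_le (ht : ‖t‖ ≤ x) (ha : ‖a‖ ≤ x) (hx : x < 1) (hQ : ‖Q‖ < 1) :
    ‖invQPochSeries t a Q‖ ≤ (qPochBound x ‖Q‖)⁻¹ * (1 - x)⁻¹ :=
  tsum_of_norm_bounded ((hasSum_geometric_of_lt_one ((norm_nonneg t).trans ht) hx).mul_left _)
    (norm_div_qPoch_le ht ha hx hQ)

lemma invQPochSeries_eq_one_add (ht : ‖t‖ < 1) (ha : ‖a‖ < 1) (hQ : ‖Q‖ < 1) :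
    invQPochSeries t a Q = 1 + ∑' n : ℕ, t ^ (n + 1) / qPoch a Q (n + 1) := by
  rw [invQPochSeries, (summable_div_qPoch ht ha hQ).tsum_eq_zero_add, pow_zero, qPoch_zero,
    div_one]

lemma one_sub_mul_invQPochSeries_sub_one (ht : ‖t‖ < 1) (ha : ‖a‖ < 1) (hQ : ‖Q‖ < 1) :
    (1 - a) * (invQPochSeries t a Q - 1) = t * invQPochSeries t (a * Q) Q := by
  rw [invQPochSeries_eq_one_add ht ha hQ, add_sub_cancel_left, invQPochSeries,
    ← tsum_mul_left, ← tsum_mul_left]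
  refine tsum_congr fun n => ?_
  have := qPoch_ne_zero (norm_mul_lt_one ha hQ) hQ n
  have := one_sub_ne_zero_of_norm_lt_one ha
  rw [qPoch_succ']
  field_simp
  ring

lemma one_sub_mul_invQPochSeries_mul (ht : ‖t‖ < 1) (ha : ‖a‖ < 1) (hQ : ‖Q‖ < 1) :
    (1 - t) * invQPochSeries t (a * Q) Q = 1 + a * (invQPochSeries (t * Q) (a * Q) Q - 1) := by
  have haQ := norm_mul_lt_one ha hQ
  have hsum := summable_div_qPoch ht haQ hQ
  rw [invQPochSeries_eq_one_add (norm_mul_lt_one ht hQ) haQ hQ, add_sub_cancel_left,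
    ← tsum_mul_left, sub_mul, one_mul]
  nth_rw 1 [invQPochSeries_eq_one_add ht haQ hQ]
  rw [add_sub_assoc, add_right_inj, invQPochSeries, ← tsum_mul_left,
    ← ((summable_nat_add_iff 1).2 hsum).tsum_sub (hsum.mul_left t)]
  refine tsum_congr fun n => ?_
  have := qPoch_ne_zero haQ hQ n
  have := one_sub_ne_zero_of_norm_lt_one (norm_mul_pow_lt_one haQ hQ n)
  rw [qPoch_succ]
  field_simp
  ring

lemma invQPochSeries_sub_one_eq (ht : ‖t‖ < 1) (ha : ‖a‖ < 1) (hQ : ‖Q‖ < 1) :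
    invQPochSeries t a Q - 1
      = t / ((1 - t) * (1 - a)) * (1 + a * (invQPochSeries (t * Q) (a * Q) Q - 1)) := by
  have h₁ := one_sub_mul_invQPochSeries_sub_one ht ha hQ
  have h₂ := one_sub_mul_invQPochSeries_mul ht ha hQ
  have := one_sub_ne_zero_of_norm_lt_one ht
  have := one_sub_ne_zero_of_norm_lt_one ha
  field_simp
  linear_combination (1 - t) * h₁ + t * h₂

end invQPochSeries

noncomputable def expansionTerm (t a Q : ℂ) (k : ℕ) : ℂ :=
  t ^ (k + 1) * a ^ k * Q ^ (k ^ 2) / (qPoch t Q (k + 1) * qPoch a Q (k + 1))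

/-- `(ta)^N Q^{N(N-1)} / ((t;Q)_N (a;Q)_N)`, written as a product to avoid the truncated
exponent `N - 1`. -/
noncomputable def remainderWeight (t a Q : ℂ) (N : ℕ) : ℂ :=
  (∏ k ∈ range N, t * a * Q ^ (2 * k)) / (qPoch t Q N * qPoch a Q N)

lemma prod_mul_pow_two_mul_mul_pow {R : Type*} [CommSemiring R] (c Q : R) (N : ℕ) :
    (∏ k ∈ range N, c * Q ^ (2 * k)) * Q ^ N = c ^ N * Q ^ (N ^ 2) := by
  induction N with
  | zero => simp
  | succ N ih =>
    calc (∏ k ∈ range (N + 1), c * Q ^ (2 * k)) * Q ^ (N + 1)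
        = (∏ k ∈ range N, c * Q ^ (2 * k)) * Q ^ N * (c * Q ^ (2 * N + 1)) := by
          rw [prod_range_succ]; ring
      _ = c ^ (N + 1) * Q ^ ((N + 1) ^ 2) := by rw [ih]; ring

section expansion

variable {t a Q : ℂ} {x : ℝ}

lemma remainderWeight_mul_eq_expansionTerm (N : ℕ) :
    remainderWeight t a Q N * (t * Q ^ N / ((1 - t * Q ^ N) * (1 - a * Q ^ N)))
      = expansionTerm t a Q N := by
  rw [remainderWeight, expansionTerm, div_mul_div_comm, qPoch_succ, qPoch_succ]
  congr 1
  · linear_combination t * prod_mul_pow_two_mul_mul_pow (t * a) Q N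
  · ring

lemma remainderWeight_succ (N : ℕ) :
    remainderWeight t a Q (N + 1) = remainderWeight t a Q N
      * (t * Q ^ N * (a * Q ^ N) / ((1 - t * Q ^ N) * (1 - a * Q ^ N))) := by
  rw [remainderWeight, remainderWeight, div_mul_div_comm, qPoch_succ, qPoch_succ, prod_range_succ]
  congr 1 <;> ring

lemma invQPochSeries_sub_one_eq_sum_add (ht : ‖t‖ < 1) (ha : ‖a‖ < 1) (hQ : ‖Q‖ < 1) (N : ℕ) :
    invQPochSeries t a Q - 1 = ∑ k ∈ range N, expansionTerm t a Q k
      + remainderWeight t a Q N * (invQPochSeries (t * Q ^ N) (a * Q ^ N) Q - 1) := by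
  induction N with
  | zero => simp [remainderWeight, qPoch_zero]
  | succ N ih =>
    rw [ih, invQPochSeries_sub_one_eq (norm_mul_pow_lt_one ht hQ N) (norm_mul_pow_lt_one ha hQ N)
      hQ, mul_assoc t (Q ^ N) Q, mul_assoc a (Q ^ N) Q, ← pow_succ, sum_range_succ,
      remainderWeight_succ, ← remainderWeight_mul_eq_expansionTerm]
    ring

lemma norm_div_qPoch_mul_qPoch_le (ht : ‖t‖ ≤ x) (ha : ‖a‖ ≤ x) (hx : x < 1) (hQ : ‖Q‖ < 1)
    (z : ℂ) (m : ℕ) : ‖z / (qPoch t Q m * qPoch a Q m)‖ ≤ (qPochBound x ‖Q‖)⁻¹ ^ 2 * ‖z‖ := by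
  have hC := qPochBound_pos x ‖Q‖
  have hCt := qPochBound_le_norm_qPoch ht hx hQ m
  have hCa := qPochBound_le_norm_qPoch ha hx hQ m
  rw [norm_div, norm_mul, div_eq_inv_mul, inv_pow, sq]
  gcongr

lemma norm_expansionTerm_le (ht : ‖t‖ ≤ x) (ha : ‖a‖ ≤ x) (hx : x < 1) (hQ : ‖Q‖ < 1) (k : ℕ) :
    ‖expansionTerm t a Q k‖ ≤ (qPochBound x ‖Q‖)⁻¹ ^ 2 * (x * (x ^ 2) ^ k) := by
  refine (norm_div_qPoch_mul_qPoch_le ht ha hx hQ _ _).trans ?_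
  gcongr
  rw [norm_mul, norm_mul, norm_pow, norm_pow, norm_pow]
  have hx0 : 0 ≤ x := (norm_nonneg t).trans ht
  have hQk : ‖Q‖ ^ (k ^ 2) ≤ 1 := pow_le_one₀ (norm_nonneg Q) hQ.le
  calc ‖t‖ ^ (k + 1) * ‖a‖ ^ k * ‖Q‖ ^ (k ^ 2) ≤ x ^ (k + 1) * x ^ k * 1 := by gcongr
    _ = x * (x ^ 2) ^ k := by ring

lemma norm_remainderWeight_le (ht : ‖t‖ ≤ x) (ha : ‖a‖ ≤ x) (hx : x < 1) (hQ : ‖Q‖ < 1)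
    (N : ℕ) : ‖remainderWeight t a Q N‖ ≤ (qPochBound x ‖Q‖)⁻¹ ^ 2 * (x ^ 2) ^ N := by
  refine (norm_div_qPoch_mul_qPoch_le ht ha hx hQ _ _).trans ?_
  gcongr
  calc ‖∏ k ∈ range N, t * a * Q ^ (2 * k)‖ = ∏ k ∈ range N, ‖t‖ * ‖a‖ * ‖Q‖ ^ (2 * k) := by
        simp only [norm_prod, norm_mul, norm_pow]
    _ ≤ ∏ _k ∈ range N, x * x * 1 := by
        have hx0 : 0 ≤ x := (norm_nonneg t).trans ht
        gcongr with k
        exact pow_le_one₀ (norm_nonneg Q) hQ.le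
    _ = (x ^ 2) ^ N := by rw [prod_const, card_range, mul_one, sq]

end expansion

theorem hasSum_expansionTerm {t a Q : ℂ} (ht : ‖t‖ < 1) (ha : ‖a‖ < 1) (hQ : ‖Q‖ < 1) :
    HasSum (expansionTerm t a Q) (invQPochSeries t a Q - 1) := by
  set x := max ‖t‖ ‖a‖
  have htx : ‖t‖ ≤ x := le_max_left _ _
  have hax : ‖a‖ ≤ x := le_max_right _ _
  have hx : x < 1 := max_lt ht ha
  have hx0 : 0 ≤ x := (norm_nonneg t).trans htx
  have hx2 : x ^ 2 < 1 := pow_lt_one₀ hx0 hx two_ne_zero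
  set C := qPochBound x ‖Q‖
  have hC : 0 < C := qPochBound_pos x ‖Q‖
  have hsummable : Summable (expansionTerm t a Q) :=
    .of_norm_bounded (((summable_geometric_of_lt_one (by positivity) hx2).mul_left x).mul_left _)
      (norm_expansionTerm_le htx hax hx hQ)
  have hremainder (N : ℕ) :
      ‖remainderWeight t a Q N * (invQPochSeries (t * Q ^ N) (a * Q ^ N) Q - 1)‖
        ≤ C⁻¹ ^ 2 * (C⁻¹ * (1 - x)⁻¹ + 1) * (x ^ 2) ^ N := by
    have hF := norm_invQPochSeries_le ((norm_mul_pow_le t hQ.le N).trans htx)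
      ((norm_mul_pow_le a hQ.le N).trans hax) hx hQ
    have h1x : 0 < 1 - x := by linarith
    rw [norm_mul]
    calc _ ≤ C⁻¹ ^ 2 * (x ^ 2) ^ N * (C⁻¹ * (1 - x)⁻¹ + 1) :=
          mul_le_mul (norm_remainderWeight_le htx hax hx hQ N)
            ((norm_sub_le _ _).trans (by rw [norm_one]; linarith)) (norm_nonneg _) (by positivity)
      _ = _ := by ring
  have hlim : Tendsto (fun N => remainderWeight t a Q N
      * (invQPochSeries (t * Q ^ N) (a * Q ^ N) Q - 1)) atTop (𝓝 0) :=
    squeeze_zero_norm hremainder <| by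
      simpa only [mul_zero] using
        (tendsto_pow_atTop_nhds_zero_of_lt_one (by positivity) hx2).const_mul
        (C⁻¹ ^ 2 * (C⁻¹ * (1 - x)⁻¹ + 1))
  rw [hsummable.hasSum_iff_tendsto_nat]
  have hpartial := (tendsto_const_nhds (x := invQPochSeries t a Q - 1)).sub hlim
  rw [sub_zero] at hpartial
  refine hpartial.congr fun N => ?_
  rw [invQPochSeries_sub_one_eq_sum_add ht ha hQ N, add_sub_cancel_right]

theorem twoPhiOne_eq_R_pos_q_general (q ζ : ℂ) (hq1 : ‖q‖ < 1) (hζ : ‖ζ‖ < 1) :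
    ∑' n : ℕ, qPoch (q ^ 2) (q ^ 2) n /
        (qPoch q (q ^ 2) n * qPoch (q ^ 2) (q ^ 2) n) * ζ ^ n
      = 1 + ζ / ((1 - ζ) * (1 - q)) * univR ζ q (q ^ 2) := by
  have hQ : ‖q ^ 2‖ < 1 := by
    rw [norm_pow]
    exact pow_lt_one₀ (norm_nonneg q) hq1 two_ne_zero
  have hlhs : ∑' n : ℕ, qPoch (q ^ 2) (q ^ 2) n /
      (qPoch q (q ^ 2) n * qPoch (q ^ 2) (q ^ 2) n) * ζ ^ n = invQPochSeries ζ q (q ^ 2) :=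
    tsum_congr fun n => by
      have := qPoch_ne_zero hQ hQ n
      field_simp
  have hrhs : ζ / ((1 - ζ) * (1 - q)) * univR ζ q (q ^ 2)
      = ∑' k, expansionTerm ζ q (q ^ 2) k := by
    rw [univR, ← tsum_mul_left]
    refine tsum_congr fun k => ?_
    rw [expansionTerm, qPoch_succ', qPoch_succ', div_mul_div_comm]
    congr 1 <;> ring
  rw [hlhs, hrhs, (hasSum_expansionTerm hζ hq1 hQ).tsum_eq, add_sub_cancel]

/-- `₂φ₁(q²,0;q;q²;ζ) = 1 + ζ/((1−ζ)(1−q)) · R(ζ,q;q²)`. -/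
theorem twoPhiOne_eq_R_pos_q (q ζ : ℂ) (hq0 : 0 < ‖q‖) (hq1 : ‖q‖ < 1)
    (hζ : ‖ζ‖ < 1) (hζ1 : ζ ≠ 1) (hq1' : q ≠ 1)
    (hζq : ∀ m : ℕ, ζ * q ^ (2 * m) ≠ 1)
    (hqodd : ∀ m : ℕ, q ^ (2 * m + 1) ≠ 1) :
    ∑' n : ℕ, qPoch (q ^ 2) (q ^ 2) n /
        (qPoch q (q ^ 2) n * qPoch (q ^ 2) (q ^ 2) n) * ζ ^ n
      = 1 + ζ / ((1 - ζ) * (1 - q)) * univR ζ q (q ^ 2) :=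
  twoPhiOne_eq_R_pos_q_general q ζ hq1 hζ
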